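/- arXiv:1812.09534 — 6 statements merged into one kernel-verified Lean document; each statement's English description precedes it below -/
import Mathlib

section
/- Let L be a bounded lattice with 0 ≠ 1, n ≥ 2, f : Lⁿ → L an n-ary aggregation function, and a ∈ Lⁿ with (0,…,0) < a < (1,…,1). Then the function h_a is an n-ary aggregation function on L, and for every x = (x₁,…,xₙ) ∈ Lⁿ: h_a(x) = 1 if x = (1,…,1); h_a(x) = f(a) if x ≥ a and (0,…,0) ≠ x ≠ (1,…,1); and h_a(x) = 0 if x ≱ a or x = (0,…,0). -/
open Classical in
/-- The characteristic function `χ_a`: `χ_a(x) = 1` if `x ≥ a` and `x ≠ 0`, else `0`. -/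
noncomputable def chi {L : Type*} [Lattice L] [BoundedOrder L] (a x : L) : L :=
  if a ≤ x ∧ x ≠ ⊥ then ⊤ else ⊥

open Classical in
/-- The binary operation `⊕_b`: `1` if both arguments are `1`, `0` if both are `0`,
and `b` otherwise. -/
noncomputable def oplus {L : Type*} [Lattice L] [BoundedOrder L] (b x y : L) : L :=
  if x = ⊤ ∧ y = ⊤ then ⊤ else if x = ⊥ ∧ y = ⊥ then ⊥ else b

/-- The iterated value `x₁ ⊕_b ⋯ ⊕_b xₙ`. -/
noncomputable def iterOplus {L : Type*} [Lattice L] [BoundedOrder L] (b : L) :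
    ∀ {n : ℕ}, (Fin (n + 1) → L) → L
  | 0, x => x 0
  | n + 1, x => oplus b (iterOplus b fun i : Fin (n + 1) => x i.castSucc) (x (Fin.last (n + 1)))

/-- An `n`-ary aggregation function on a bounded lattice: monotone (componentwise
order on tuples) and preserving the bottom and top tuples. -/
def IsAgg {L : Type*} [Lattice L] [BoundedOrder L] {n : ℕ}
    (A : (Fin n → L) → L) : Prop :=
  Monotone A ∧ A ⊥ = ⊥ ∧ A ⊤ = ⊤

open Classical in
/-- The function `h_a(x) = (⋀_{i ∈ J_a} χ_{aᵢ}(xᵢ)) ∧ (x₁ ⊕_{f(a)} ⋯ ⊕_{f(a)} xₙ)`,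
where `J_a = {i : aᵢ ≠ 0}`. -/
noncomputable def hAux {L : Type*} [Lattice L] [BoundedOrder L] {n : ℕ}
    (f : (Fin (n + 1) → L) → L) (a x : Fin (n + 1) → L) : L :=
  ((Finset.univ.filter fun i => a i ≠ ⊥).inf fun i => chi (a i) (x i)) ⊓ iterOplus (f a) x


section Aux
variable {L : Type*} [Lattice L] [BoundedOrder L]

lemma oplus_top_top (b : L) : oplus b ⊤ ⊤ = ⊤ := by simp [oplus]

lemma oplus_bot_bot (h01 : (⊥ : L) ≠ ⊤) (b : L) : oplus b ⊥ ⊥ = ⊥ := by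
  simp [oplus, h01]

lemma oplus_self_left (b y : L) : oplus b b y = b := by
  unfold oplus
  split_ifs with h1 h2
  · exact h1.1.symm
  · exact h2.1.symm
  · rfl

lemma oplus_mono (h01 : (⊥ : L) ≠ ⊤) (b : L) {x y x' y' : L} (hx : x ≤ x') (hy : y ≤ y') :
    oplus b x y ≤ oplus b x' y' := by
  by_cases hT : x' = ⊤ ∧ y' = ⊤
  · simp [oplus, hT]
  by_cases hB : x' = ⊥ ∧ y' = ⊥
  · have hx0 : x = ⊥ := le_bot_iff.mp (hB.1 ▸ hx)
    have hy0 : y = ⊥ := le_bot_iff.mp (hB.2 ▸ hy)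
    subst hx0; subst hy0
    rw [oplus_bot_bot h01]
    exact bot_le
  · have hR : oplus b x' y' = b := by
      unfold oplus; rw [if_neg hT, if_neg hB]
    rw [hR]
    have hxT : ¬ (x = ⊤ ∧ y = ⊤) := fun ⟨h1, h2⟩ =>
      hT ⟨top_le_iff.mp (h1 ▸ hx), top_le_iff.mp (h2 ▸ hy)⟩
    unfold oplus
    rw [if_neg hxT]
    split_ifs
    · exact bot_le
    · exact le_rfl

lemma iterOplus_top (b : L) : ∀ {n : ℕ} (x : Fin (n + 1) → L),
    (∀ i, x i = ⊤) → iterOplus b x = ⊤ := by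
  intro n
  induction n with
  | zero => intro x h; exact h 0
  | succ m ih =>
    intro x h
    show oplus b (iterOplus b fun i : Fin (m + 1) => x i.castSucc) (x (Fin.last (m + 1))) = ⊤
    rw [ih _ fun i => h i.castSucc, h (Fin.last (m + 1))]
    exact oplus_top_top b

lemma iterOplus_bot (h01 : (⊥ : L) ≠ ⊤) (b : L) : ∀ {n : ℕ} (x : Fin (n + 1) → L),
    (∀ i, x i = ⊥) → iterOplus b x = ⊥ := by
  intro n
  induction n with
  | zero => intro x h; exact h 0
  | succ m ih =>
    intro x h
    show oplus b (iterOplus b fun i : Fin (m + 1) => x i.castSucc) (x (Fin.last (m + 1))) = ⊥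
    rw [ih _ fun i => h i.castSucc, h (Fin.last (m + 1))]
    exact oplus_bot_bot h01 b

lemma iterOplus_mid (h01 : (⊥ : L) ≠ ⊤) (b : L) : ∀ (m : ℕ) (x : Fin (m + 2) → L),
    (¬ ∀ i, x i = ⊤) → (¬ ∀ i, x i = ⊥) → iterOplus b x = b := by
  intro m
  induction m with
  | zero =>
    intro x hT hB
    show oplus b (iterOplus b fun i : Fin 1 => x i.castSucc) (x (Fin.last 1)) = b
    have h0 : iterOplus b (fun i : Fin 1 => x i.castSucc) = x 0 := rfl
    rw [h0]
    have hT' : ¬ (x 0 = ⊤ ∧ x (Fin.last 1) = ⊤) := by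
      intro ⟨h1, h2⟩
      exact hT (fun i => by fin_cases i <;> assumption)
    have hB' : ¬ (x 0 = ⊥ ∧ x (Fin.last 1) = ⊥) := by
      intro ⟨h1, h2⟩
      exact hB (fun i => by fin_cases i <;> assumption)
    unfold oplus
    rw [if_neg hT', if_neg hB']
  | succ m ih =>
    intro x hT hB
    show oplus b (iterOplus b fun i : Fin (m + 2) => x i.castSucc) (x (Fin.last (m + 2))) = b
    by_cases hFT : ∀ i : Fin (m + 2), x i.castSucc = ⊤
    · rw [iterOplus_top b _ hFT]
      have hlast : x (Fin.last (m + 2)) ≠ ⊤ := by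
        intro h
        exact hT (fun i => Fin.lastCases h hFT i)
      unfold oplus
      rw [if_neg (fun h => hlast h.2), if_neg (fun h => h01 h.1.symm)]
    by_cases hFB : ∀ i : Fin (m + 2), x i.castSucc = ⊥
    · rw [iterOplus_bot h01 b _ hFB]
      have hlast : x (Fin.last (m + 2)) ≠ ⊥ := by
        intro h
        exact hB (fun i => Fin.lastCases h hFB i)
      unfold oplus
      rw [if_neg (fun h => h01 h.1), if_neg (fun h => hlast h.2)]
    · rw [ih _ hFT hFB]
      exact oplus_self_left b _

lemma iterOplus_mono (h01 : (⊥ : L) ≠ ⊤) (b : L) : ∀ {n : ℕ} {x y : Fin (n + 1) → L},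
    x ≤ y → iterOplus b x ≤ iterOplus b y := by
  intro n
  induction n with
  | zero => intro x y h; exact h 0
  | succ m ih =>
    intro x y h
    exact oplus_mono h01 b (ih fun i => h i.castSucc) (h (Fin.last (m + 1)))

lemma chi_mono (a : L) {x y : L} (h : x ≤ y) : chi a x ≤ chi a y := by
  unfold chi
  split_ifs with h1 h2
  · exact le_rfl
  · exact absurd ⟨h1.1.trans h, fun hy => h1.2 (le_bot_iff.mp (hy ▸ h))⟩ h2
  · exact bot_le
  · exact le_rfl

end Aux

/-- Let `L` be a bounded lattice with `0 ≠ 1`, `n ≥ 2`, `f : Lⁿ → L` an aggregation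
function and `a ∈ Lⁿ` with `(0,…,0) < a < (1,…,1)`.  Then `h_a` is an aggregation
function on `L`, and it takes the value `1` at `(1,…,1)`, the value `f(a)` at every
`x ≥ a` with `(0,…,0) ≠ x ≠ (1,…,1)`, and `0` if `x ≱ a` or `x = (0,…,0)`.
(A tuple of length `n ≥ 2` is written as `x : Fin (n+1) → L` with `n ≥ 1`.) -/
theorem hAux_isAggregation_and_values {L : Type*} [Lattice L] [BoundedOrder L]
    (h01 : (⊥ : L) ≠ ⊤) (n : ℕ) (hn : 1 ≤ n)
    (f : (Fin (n + 1) → L) → L) (hf : IsAgg f)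
    (a : Fin (n + 1) → L) (ha0 : (⊥ : Fin (n + 1) → L) < a) (ha1 : a < ⊤) :
    IsAgg (hAux f a) ∧
      ∀ x : Fin (n + 1) → L,
        (x = ⊤ → hAux f a x = ⊤) ∧
        (a ≤ x → x ≠ ⊥ → x ≠ ⊤ → hAux f a x = f a) ∧
        (¬ a ≤ x ∨ x = ⊥ → hAux f a x = ⊥)  := by
  classical
  obtain ⟨m, rfl⟩ : ∃ m, n = m + 1 := ⟨n - 1, by omega⟩
  have hne_top : ∀ {x : Fin (m + 2) → L}, x ≠ ⊤ → ¬ ∀ i, x i = ⊤ := by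
    intro x hx h; exact hx (funext h)
  have hne_bot : ∀ {x : Fin (m + 2) → L}, x ≠ ⊥ → ¬ ∀ i, x i = ⊥ := by
    intro x hx h; exact hx (funext h)
  have hbotval : hAux f a ⊥ = ⊥ := by
    unfold hAux
    rw [iterOplus_bot h01 (f a) (⊥ : Fin (m + 2) → L) (fun _ => rfl), inf_bot_eq]
  have htopval : hAux f a ⊤ = ⊤ := by
    unfold hAux
    rw [iterOplus_top (f a) (⊤ : Fin (m + 2) → L) (fun _ => rfl)]
    rw [inf_top_eq]
    apply le_antisymm le_top
    apply Finset.le_inf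
    intro i _
    unfold chi
    rw [if_pos ⟨le_top, fun h => h01 h.symm⟩]
  refine ⟨⟨?_, hbotval, htopval⟩, ?_⟩
  · intro x y hxy
    unfold hAux
    exact inf_le_inf (Finset.inf_mono_fun fun i _ => chi_mono (a i) (hxy i))
      (iterOplus_mono h01 (f a) hxy)
  · intro x
    refine ⟨fun hx => hx ▸ htopval, ?_, ?_⟩
    · intro hax hxB hxT
      unfold hAux
      rw [iterOplus_mid h01 (f a) m x (hne_top hxT) (hne_bot hxB)]
      have hchi : ((Finset.univ.filter fun i => a i ≠ ⊥).inf fun i => chi (a i) (x i)) = ⊤ := by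
        apply le_antisymm le_top
        apply Finset.le_inf
        intro i hi
        rw [Finset.mem_filter] at hi
        have hxi : x i ≠ ⊥ := fun h => hi.2 (le_bot_iff.mp (h ▸ hax i))
        unfold chi
        rw [if_pos ⟨hax i, hxi⟩]
      rw [hchi, top_inf_eq]
    · rintro (hax | rfl)
      · obtain ⟨i, hi⟩ : ∃ i, ¬ a i ≤ x i := by
          by_contra h
          push_neg at h
          exact hax h
        have hai : a i ≠ ⊥ := fun h => hi (h ▸ bot_le)
        have hmem : i ∈ Finset.univ.filter fun j => a j ≠ ⊥ :=
          Finset.mem_filter.mpr ⟨Finset.mem_univ i, hai⟩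
        have hchi : chi (a i) (x i) = ⊥ := by
          unfold chi
          rw [if_neg (fun h => hi h.1)]
        apply le_bot_iff.mp
        calc hAux f a x ≤ (Finset.univ.filter fun j => a j ≠ ⊥).inf
              fun j => chi (a j) (x j) := inf_le_left
          _ ≤ chi (a i) (x i) := Finset.inf_le hmem
          _ = ⊥ := hchi
      · exact hbotval
end

section
/- Let L be a bounded lattice with 0 ≠ 1, n ≥ 2, f : Lⁿ → L an n-ary aggregation function, and a ∈ Lⁿ with (0,…,0) < a < (1,…,1). Then for every x = (x₁,…,xₙ) ∈ Lⁿ: g_a(x) = 0 if x = (0,…,0); g_a(x) = f(a) if x ≤ a and (0,…,0) ≠ x ≠ (1,…,1); and g_a(x) = 1 if x ≰ a or x = (1,…,1). -/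
open Classical in
/-- The function `μ_a`: `μ_a(x) = 0` if `x ≤ a` and `x ≠ 1`, else `1`. -/
noncomputable def mu {L : Type*} [Lattice L] [BoundedOrder L] (a x : L) : L :=
  if x ≤ a ∧ x ≠ ⊤ then ⊥ else ⊤

open Classical in
/-- The function `g_a(x) = (⋁_{i ∈ Ĵ_a} μ_{aᵢ}(xᵢ)) ∨ (x₁ ⊕_{f(a)} ⋯ ⊕_{f(a)} xₙ)`,
where `Ĵ_a = {i : aᵢ ≠ 1}`. -/
noncomputable def gAux {L : Type*} [Lattice L] [BoundedOrder L] {n : ℕ}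
    (f : (Fin (n + 1) → L) → L) (a x : Fin (n + 1) → L) : L :=
  ((Finset.univ.filter fun i => a i ≠ ⊤).sup fun i => mu (a i) (x i)) ⊔ iterOplus (f a) x

open Classical in
lemma iterOplus_spec {L : Type*} [Lattice L] [BoundedOrder L] (hbt : (⊥ : L) ≠ ⊤) (b : L) :
    ∀ n, 1 ≤ n → ∀ x : Fin (n + 1) → L,
      iterOplus b x = if ∀ i, x i = ⊤ then ⊤ else if ∀ i, x i = ⊥ then ⊥ else b := by
  intro n
  induction n with
  | zero => omega
  | succ n ih =>
    intro _ x
    have hstep : iterOplus b x =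
        oplus b (iterOplus b fun i : Fin (n + 1) => x i.castSucc) (x (Fin.last (n + 1))) := rfl
    rcases Nat.eq_zero_or_pos n with hn | hn
    · subst hn
      have h0 : iterOplus b (fun i : Fin 1 => x i.castSucc) = x 0 := by
        simp [iterOplus]
      rw [hstep, h0]
      have hlast : x (Fin.last (0 + 1)) = x 1 := rfl
      rw [hlast]
      have eT : (∀ i : Fin (0 + 1 + 1), x i = ⊤) ↔ (x 0 = ⊤ ∧ x 1 = ⊤) :=
        ⟨fun h => ⟨h 0, h 1⟩, fun h i => by fin_cases i <;> simp [h.1, h.2]⟩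
      have eB : (∀ i : Fin (0 + 1 + 1), x i = ⊥) ↔ (x 0 = ⊥ ∧ x 1 = ⊥) :=
        ⟨fun h => ⟨h 0, h 1⟩, fun h i => by fin_cases i <;> simp [h.1, h.2]⟩
      simp only [oplus, eT, eB]
    · have hP := ih hn (fun i : Fin (n + 1) => x i.castSucc)
      rw [hstep, hP]
      by_cases hT : ∀ i : Fin (n + 1), x i.castSucc = ⊤
      · simp only [if_pos hT]
        by_cases hlt : x (Fin.last (n + 1)) = ⊤
        · have hall : ∀ i : Fin (n + 2), x i = ⊤ := by
            intro i
            rcases Fin.eq_castSucc_or_eq_last i with ⟨j, rfl⟩ | rfl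
            · exact hT j
            · exact hlt
          simp [oplus, hlt, hall]
        · have hnall : ¬ ∀ i : Fin (n + 2), x i = ⊤ := fun h => hlt (h _)
          have hnbot : ¬ ∀ i : Fin (n + 2), x i = ⊥ := by
            intro h
            exact hbt (((h ((0 : Fin (n+1)).castSucc)).symm).trans (hT 0))
          simp [oplus, hlt, hnall, hnbot, hbt.symm]
      · by_cases hB : ∀ i : Fin (n + 1), x i.castSucc = ⊥
        · simp only [if_neg hT, if_pos hB]
          have hnallT : ¬ ∀ i : Fin (n + 2), x i = ⊤ := by
            intro h; exact hT fun i => h _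
          by_cases hlb : x (Fin.last (n + 1)) = ⊥
          · have hall : ∀ i : Fin (n + 2), x i = ⊥ := by
              intro i
              rcases Fin.eq_castSucc_or_eq_last i with ⟨j, rfl⟩ | rfl
              · exact hB j
              · exact hlb
            simp [oplus, hbt, hnallT, hall]
          · have hnallB : ¬ ∀ i : Fin (n + 2), x i = ⊥ := fun h => hlb (h _)
            simp [oplus, hbt, hlb, hnallT, hnallB]
        · simp only [if_neg hT, if_neg hB]
          have hnallT : ¬ ∀ i : Fin (n + 2), x i = ⊤ := by
            intro h; exact hT fun i => h _
          have hnallB : ¬ ∀ i : Fin (n + 2), x i = ⊥ := by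
            intro h; exact hB fun i => h _
          simp only [if_neg hnallT, if_neg hnallB, oplus]
          by_cases hbT : b = ⊤
          · by_cases hlt : x (Fin.last (n + 1)) = ⊤ <;> simp [hbT, hlt, hbt.symm]
          · by_cases hbB : b = ⊥
            · by_cases hlb : x (Fin.last (n + 1)) = ⊥ <;> simp [hbB, hbT, hlb, hbt]
            · simp [hbT, hbB]

/-- Let `L` be a bounded lattice with `0 ≠ 1`, `n ≥ 2`, `f : Lⁿ → L` an aggregation
function and `a ∈ Lⁿ` with `(0,…,0) < a < (1,…,1)`.  Then `g_a` takes the value `0`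
at `(0,…,0)`, the value `f(a)` at every `x ≤ a` with `(0,…,0) ≠ x ≠ (1,…,1)`, and
`1` if `x ≰ a` or `x = (1,…,1)`.
(A tuple of length `n ≥ 2` is written as `x : Fin (n+1) → L` with `n ≥ 1`.) -/
theorem gAux_values {L : Type*} [Lattice L] [BoundedOrder L]
    (h01 : (⊥ : L) ≠ ⊤) (n : ℕ) (hn : 1 ≤ n)
    (f : (Fin (n + 1) → L) → L) (hf : IsAgg f)
    (a : Fin (n + 1) → L) (ha0 : (⊥ : Fin (n + 1) → L) < a) (ha1 : a < ⊤) :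
    ∀ x : Fin (n + 1) → L,
      (x = ⊥ → gAux f a x = ⊥) ∧
      (x ≤ a → x ≠ ⊥ → x ≠ ⊤ → gAux f a x = f a) ∧
      (¬ x ≤ a ∨ x = ⊤ → gAux f a x = ⊤) := by
  intro x
  classical
  refine ⟨?_, ?_, ?_⟩
  · rintro rfl
    have hiter : iterOplus (f a) (⊥ : Fin (n + 1) → L) = ⊥ := by
      rw [iterOplus_spec h01 (f a) n hn]
      have h1 : ¬ ∀ i : Fin (n + 1), (⊥ : Fin (n + 1) → L) i = ⊤ := by
        intro h; exact h01 (h 0)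
      have h2 : ∀ i : Fin (n + 1), (⊥ : Fin (n + 1) → L) i = ⊥ := fun i => rfl
      rw [if_neg h1, if_pos h2]
    have hsup : ((Finset.univ.filter fun i => a i ≠ ⊤).sup
        fun i => mu (a i) ((⊥ : Fin (n + 1) → L) i)) = ⊥ := by
      refine le_antisymm (Finset.sup_le fun i _ => ?_) bot_le
      have : mu (a i) ((⊥ : Fin (n + 1) → L) i) = ⊥ := by
        simp [mu, h01]
      rw [this]
    rw [gAux, hsup, hiter, sup_idem]
  · intro hxa hxb hxt
    have hiter : iterOplus (f a) x = f a := by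
      rw [iterOplus_spec h01 (f a) n hn]
      have h1 : ¬ ∀ i, x i = ⊤ := fun h => hxt (funext fun i => h i)
      have h2 : ¬ ∀ i, x i = ⊥ := fun h => hxb (funext fun i => h i)
      rw [if_neg h1, if_neg h2]
    have hsup : ((Finset.univ.filter fun i => a i ≠ ⊤).sup
        fun i => mu (a i) (x i)) = ⊥ := by
      refine le_antisymm (Finset.sup_le fun i hi => ?_) bot_le
      have hai : a i ≠ ⊤ := (Finset.mem_filter.mp hi).2
      have hxi : x i ≤ a i := hxa i
      have hxit : x i ≠ ⊤ := fun h => hai (top_le_iff.mp (h ▸ hxi))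
      simp [mu, hxi, hxit]
    rw [gAux, hsup, hiter, bot_sup_eq]
  · rintro (hxa | rfl)
    · obtain ⟨i, hi⟩ : ∃ i, ¬ x i ≤ a i := by
        by_contra h
        push_neg at h
        exact hxa h
      have hai : a i ≠ ⊤ := fun h => hi (h ▸ le_top)
      have hmu : mu (a i) (x i) = ⊤ := by
        simp [mu, hi]
      have hmem : i ∈ Finset.univ.filter fun i => a i ≠ ⊤ :=
        Finset.mem_filter.mpr ⟨Finset.mem_univ i, hai⟩
      refine top_le_iff.mp ?_
      calc (⊤ : L) = mu (a i) (x i) := hmu.symm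
        _ ≤ _ := le_trans (Finset.le_sup (f := fun i => mu (a i) (x i)) hmem) le_sup_left
    · have hiter : iterOplus (f a) (⊤ : Fin (n + 1) → L) = ⊤ := by
        rw [iterOplus_spec h01 (f a) n hn]
        have h : ∀ i : Fin (n + 1), (⊤ : Fin (n + 1) → L) i = ⊤ := fun i => rfl
        rw [if_pos h]
      rw [gAux, hiter, sup_top_eq]
end

section
/- Let L be a complete lattice with least element 0 and greatest element 1, 0 ≠ 1, n ≥ 2, and f : Lⁿ → L an n-ary aggregation function. Then for every x ∈ Lⁿ, f(x) = ⨆_{a ∈ Lⁿ_*} h_a(x), where Lⁿ_* = Lⁿ \ {(0,…,0), (1,…,1)} and the (possibly infinite) supremum is taken over all a ∈ Lⁿ_*. -/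
section aux
variable {L : Type*} [Lattice L] [BoundedOrder L]

lemma iterOplus_all_top {n : ℕ} (b : L) (x : Fin (n+1) → L)
    (hx : ∀ i, x i = ⊤) : iterOplus b x = ⊤ := by
  induction n with
  | zero => simpa [iterOplus] using hx 0
  | succ n ih =>
    rw [iterOplus, ih _ (fun i => hx _), hx (Fin.last _)]
    simp [oplus]

lemma iterOplus_all_bot (h01 : (⊥:L) ≠ ⊤) {n : ℕ} (b : L) (x : Fin (n+1) → L)
    (hx : ∀ i, x i = ⊥) : iterOplus b x = ⊥ := by
  induction n with
  | zero => simpa [iterOplus] using hx 0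
  | succ n ih =>
    rw [iterOplus, ih _ (fun i => hx _), hx (Fin.last _)]
    simp [oplus, h01]

lemma iterOplus_mixed (h01 : (⊥:L) ≠ ⊤) {n : ℕ} (b : L) (x : Fin (n+2) → L)
    (hnt : ∃ i, x i ≠ ⊤) (hnb : ∃ i, x i ≠ ⊥) : iterOplus b x = b := by
  induction n with
  | zero =>
    have h0 : ((0 : Fin 1).castSucc : Fin 2) = 0 := rfl
    have hl : (Fin.last 1 : Fin 2) = 1 := rfl
    simp only [iterOplus, h0, hl]
    obtain ⟨i, hi⟩ := hnt
    obtain ⟨j, hj⟩ := hnb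
    unfold oplus
    split_ifs with h1 h2
    · exfalso; fin_cases i <;> simp_all
    · exfalso; fin_cases j <;> simp_all
    · rfl
  | succ n ih =>
    rw [iterOplus]
    by_cases hpt : ∀ i : Fin (n+2), x i.castSucc = ⊤
    · rw [iterOplus_all_top _ _ hpt]
      have hl : x (Fin.last (n+2)) ≠ ⊤ := by
        obtain ⟨i, hi⟩ := hnt
        rcases Fin.eq_castSucc_or_eq_last i with ⟨j, rfl⟩ | rfl
        · exact absurd (hpt j) hi
        · exact hi
      unfold oplus
      rw [if_neg (fun h => hl h.2), if_neg (fun h => h01 h.1.symm)]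
    · by_cases hpb : ∀ i : Fin (n+2), x i.castSucc = ⊥
      · rw [iterOplus_all_bot h01 _ _ hpb]
        have hl : x (Fin.last (n+2)) ≠ ⊥ := by
          obtain ⟨i, hi⟩ := hnb
          rcases Fin.eq_castSucc_or_eq_last i with ⟨j, rfl⟩ | rfl
          · exact absurd (hpb j) hi
          · exact hi
        unfold oplus
        rw [if_neg (fun h => h01 h.1), if_neg (fun h => hl h.2)]
      · push_neg at hpt hpb
        rw [ih _ hpt hpb]
        unfold oplus
        split_ifs with h1 h2
        · exact h1.1.symm
        · exact h2.1.symm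
        · rfl

end aux


/-- Let `L` be a complete lattice with `0 ≠ 1`, `n ≥ 2` and `f : Lⁿ → L` an
aggregation function.  Then `f(x) = ⨆_{a ∈ Lⁿ_*} h_a(x)` for every `x ∈ Lⁿ`, where
`Lⁿ_* = Lⁿ \ {(0,…,0), (1,…,1)}` and the (possibly infinite) supremum is taken over
all `a ∈ Lⁿ_*`.
(A tuple of length `n ≥ 2` is written as `x : Fin (n+1) → L` with `n ≥ 1`.) -/
theorem agg_eq_iSup_hAux {L : Type*} [CompleteLattice L]
    (h01 : (⊥ : L) ≠ ⊤) (n : ℕ) (hn : 1 ≤ n)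
    (f : (Fin (n + 1) → L) → L) (hf : IsAgg f) (x : Fin (n + 1) → L) :
    f x = ⨆ a ∈ {a : Fin (n + 1) → L | a ≠ ⊥ ∧ a ≠ ⊤}, hAux f a x := by
  classical
  obtain ⟨m, rfl⟩ : ∃ m, n = m + 1 := ⟨n - 1, (Nat.succ_pred_eq_of_pos hn).symm⟩
  obtain ⟨hmono, hbot, htop⟩ := hf
  by_cases hxb : x = ⊥
  · subst hxb
    rw [hbot]
    refine (le_antisymm (by
      refine iSup₂_le fun a _ => ?_
      have : iterOplus (f a) (⊥ : Fin (m+1+1) → L) = ⊥ :=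
        iterOplus_all_bot h01 _ _ (fun i => rfl)
      rw [hAux, this, inf_bot_eq]) bot_le).symm
  · by_cases hxt : x = ⊤
    · subst hxt
      rw [htop]
      refine (le_antisymm le_top ?_).symm
      set a : Fin (m+1+1) → L := fun i => if i = 0 then ⊤ else ⊥ with ha
      have hab : a ≠ ⊥ := by
        intro h
        have := congrFun h 0
        simp [ha] at this
        exact h01 this.symm
      have hat : a ≠ ⊤ := by
        intro h
        have := congrFun h 1
        have h1 : (1 : Fin (m+1+1)) ≠ 0 := by
          simp [Fin.ext_iff]
        simp [ha, h1] at this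
        exact h01 this
      have hmem : a ∈ {a : Fin (m+1+1) → L | a ≠ ⊥ ∧ a ≠ ⊤} := ⟨hab, hat⟩
      have hval : hAux f a ⊤ = ⊤ := by
        have ht : iterOplus (f a) (⊤ : Fin (m+1+1) → L) = ⊤ :=
          iterOplus_all_top _ _ (fun i => rfl)
        rw [hAux, ht, inf_top_eq]
        refine le_antisymm le_top (Finset.le_inf fun i _ => ?_)
        rw [chi, if_pos ⟨le_top, fun h => h01 h.symm⟩]
      calc (⊤ : L) = hAux f a ⊤ := hval.symm
        _ ≤ _ := le_iSup₂ (f := fun a _ => hAux f a ⊤) a hmem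
    · -- mixed case
      have hnt : ∃ i, x i ≠ ⊤ := by
        by_contra h; push_neg at h; exact hxt (funext h)
      have hnb : ∃ i, x i ≠ ⊥ := by
        by_contra h; push_neg at h; exact hxb (funext h)
      refine le_antisymm ?_ ?_
      · have hval : hAux f x x = f x := by
          rw [hAux, iterOplus_mixed h01 _ _ hnt hnb]
          have : ((Finset.univ.filter fun i => x i ≠ ⊥).inf fun i => chi (x i) (x i)) = ⊤ := by
            refine le_antisymm le_top (Finset.le_inf fun i hi => ?_)
            rw [Finset.mem_filter] at hi
            rw [chi, if_pos ⟨le_rfl, hi.2⟩]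
          rw [this, top_inf_eq]
        calc f x = hAux f x x := hval.symm
          _ ≤ _ := le_iSup₂ (f := fun a _ => hAux f a x) x ⟨hxb, hxt⟩
      · refine iSup₂_le fun a _ => ?_
        by_cases hc : ∀ i ∈ Finset.univ.filter fun i => a i ≠ ⊥, a i ≤ x i ∧ x i ≠ ⊥
        · have hax : a ≤ x := by
            intro i
            by_cases hai : a i = ⊥
            · rw [hai]; exact bot_le
            · exact (hc i (Finset.mem_filter.mpr ⟨Finset.mem_univ _, hai⟩)).1
          calc hAux f a x ≤ iterOplus (f a) x := inf_le_right
            _ = f a := iterOplus_mixed h01 _ _ hnt hnb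
            _ ≤ f x := hmono hax
        · push_neg at hc
          obtain ⟨i, hi, hic⟩ := hc
          have : chi (a i) (x i) = ⊥ := by rw [chi, if_neg]; exact fun h => h.2 (hic h.1)
          calc hAux f a x ≤ (Finset.univ.filter fun i => a i ≠ ⊥).inf
                fun i => chi (a i) (x i) := inf_le_left
            _ ≤ chi (a i) (x i) := Finset.inf_le hi
            _ = ⊥ := this
            _ ≤ f x := bot_le
end

section
/- Let A be a finite set and C a clone on A containing an n-ary near-unanimity function for some n ≥ 3. Then C is finitely generated: there exists a finite subset F ⊆ C such that the clone generated by F equals C. -/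
/-- A clone on a set `A`: a family `C` of finitary operations (given by arity)
containing all projections and closed under composition. -/
structure IsClone (A : Type*) (C : ∀ n : ℕ, Set ((Fin n → A) → A)) : Prop where
  proj : ∀ {n : ℕ} (i : Fin n), (fun x => x i) ∈ C n
  comp : ∀ {k n : ℕ} (f : (Fin k → A) → A) (g : Fin k → (Fin n → A) → A),
    f ∈ C k → (∀ i, g i ∈ C n) → (fun x => f fun i => g i x) ∈ C n

/-- Membership in the clone generated by a set `F` of finitary operations on `A`
(operations are recorded together with their arities): the smallest set of operations
containing `F` and all projections and closed under composition. -/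
inductive GenClone {A : Type*} (F : Set ((n : ℕ) × ((Fin n → A) → A))) :
    ∀ {n : ℕ}, ((Fin n → A) → A) → Prop
  | mem (p : (n : ℕ) × ((Fin n → A) → A)) : p ∈ F → GenClone F p.2
  | proj {n : ℕ} (i : Fin n) : GenClone F fun x => x i
  | comp {k n : ℕ} (f : (Fin k → A) → A) (g : Fin k → (Fin n → A) → A) :
      GenClone F f → (∀ i, GenClone F (g i)) → GenClone F fun x => f fun i => g i x

/-- Let `A` be a finite set and `C` a clone on `A` containing an `n`-ary
near-unanimity function for some `n ≥ 3`.  Then `C` is finitely generated: there is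
a finite subset `F` of `C` whose generated clone equals `C`. -/
theorem clone_with_nu_finitely_generated {A : Type*} [Fintype A]
    (C : ∀ n : ℕ, Set ((Fin n → A) → A)) (hC : IsClone A C)
    (n : ℕ) (hn : 3 ≤ n) (f : (Fin n → A) → A) (hfC : f ∈ C n)
    (hnu : ∀ (x y : A) (j : Fin n), f (Function.update (fun _ => x) j y) = x) :
    ∃ F : Set ((m : ℕ) × ((Fin m → A) → A)), F.Finite ∧
      (∀ p ∈ F, p.2 ∈ C p.1) ∧
      (∀ (m : ℕ) (g : (Fin m → A) → A), GenClone F g ↔ g ∈ C m) := by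
  classical
  set k := max n (Fintype.card A ^ (n - 1)) with hk
  set F : Set ((m : ℕ) × ((Fin m → A) → A)) :=
    {p | p.1 ≤ k ∧ p.2 ∈ C p.1} with hF
  have hkn : n ≤ k := le_max_left _ _
  refine ⟨F, ?_, fun p hp => hp.2, ?_⟩
  · -- finiteness
    have hsub : F ⊆ ⋃ m ∈ Set.Iic k,
        Sigma.mk m '' (Set.univ : Set ((Fin m → A) → A)) := by
      rintro ⟨m, g⟩ ⟨h1, _⟩
      exact Set.mem_biUnion h1 ⟨g, trivial, rfl⟩
    exact Set.Finite.subset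
      ((Set.finite_Iic k).biUnion fun m _ => Set.finite_univ.image _) hsub
  · intro m g
    constructor
    · intro h
      induction h with
      | mem p hp => exact hp.2
      | proj i => exact hC.proj i
      | comp u v _ _ ihu ihv => exact hC.comp u v ihu ihv
    · intro hg
      by_cases hm : m ≤ k
      · exact GenClone.mem ⟨m, g⟩ ⟨hm, hg⟩
      · have hm1 : 1 ≤ m := by omega
        have hnem : Nonempty (Fin m) := ⟨⟨0, by omega⟩⟩
        -- interpolation on finitely many points
        have key : ∀ s (a : Fin s → (Fin m → A)),
            ∃ t, GenClone F t ∧ ∀ i, t (a i) = g (a i) := by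
          intro s
          induction s using Nat.strong_induction_on with
          | _ s ih =>
            intro a
            by_cases hs : s < n
            · -- base case: at most n-1 points, identify variables
              have hcard : Fintype.card (Fin s → A) ≤ Fintype.card (Fin k) := by
                rw [Fintype.card_fun, Fintype.card_fin, Fintype.card_fin]
                rcases Nat.eq_zero_or_pos (Fintype.card A) with h0 | h1
                · rw [h0]
                  have : (0 : ℕ) ^ s ≤ 1 := by
                    cases s with
                    | zero => simp
                    | succ s => simp
                  omega
                · calc Fintype.card A ^ s ≤ Fintype.card A ^ (n - 1) :=
                        Nat.pow_le_pow_right h1 (by omega)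
                    _ ≤ k := le_max_right _ _
              obtain ⟨emb⟩ := Function.Embedding.nonempty_of_card_le hcard
              set cl : Fin m → Fin k := fun j => emb (fun i => a i j) with hcl
              set r : Fin k → Fin m := Function.invFun cl with hrdef
              have hr : ∀ j, cl (r (cl j)) = cl j := fun j =>
                Function.invFun_eq ⟨j, rfl⟩
              have hcol : ∀ j i, a i (r (cl j)) = a i j := by
                intro j i
                have := emb.injective (hr j)
                exact congrFun this i
              set h : (Fin k → A) → A := fun y => g (fun j => y (cl j)) with hhdef
              have hh : h ∈ C k :=
                hC.comp g (fun j y => y (cl j)) hg (fun j => hC.proj (cl j))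
              refine ⟨fun x => h (fun j' => x (r j')),
                GenClone.comp h (fun j' x => x (r j'))
                  (GenClone.mem ⟨k, h⟩ ⟨le_refl k, hh⟩)
                  (fun j' => GenClone.proj (r j')), fun i => ?_⟩
              show g (fun j => a i (r (cl j))) = g (a i)
              exact congrArg g (funext fun j => hcol j i)
            · -- inductive step: glue with the near-unanimity operation
              obtain ⟨sp, rfl⟩ : ∃ sp, s = sp + 1 := ⟨s - 1, by omega⟩
              have hns : n ≤ sp + 1 := by omega
              set ι : Fin n → Fin (sp + 1) := Fin.castLE hns with hι
              have hιinj : Function.Injective ι := Fin.castLE_injective hns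
              choose t ht hint using fun i : Fin n =>
                ih sp (by omega) (fun q => a ((ι i).succAbove q))
              refine ⟨fun x => f (fun i => t i x),
                GenClone.comp f t (GenClone.mem ⟨n, f⟩ ⟨hkn, hfC⟩) ht, fun j => ?_⟩
              have hval : ∀ i, ι i ≠ j → t i (a j) = g (a j) := by
                intro i hij
                obtain ⟨q, hq⟩ := Fin.exists_succAbove_eq hij.symm
                rw [← hq]
                exact hint i q
              obtain ⟨i0, hi0⟩ : ∃ i0 : Fin n, ∀ i, i ≠ i0 → t i (a j) = g (a j) := by
                by_cases hex : ∃ i, ι i = j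
                · obtain ⟨i0, hi0⟩ := hex
                  exact ⟨i0, fun i hi => hval i (fun hc => hi (hιinj (hi0 ▸ hc)))⟩
                · exact ⟨⟨0, by omega⟩, fun i _ => hval i (fun hc => hex ⟨i, hc⟩)⟩
              have hup : (fun i => t i (a j)) =
                  Function.update (fun _ => g (a j)) i0 (t i0 (a j)) := by
                funext i
                by_cases hii : i = i0
                · subst hii; simp
                · rw [Function.update_of_ne hii]
                  exact hi0 i hii
              show f (fun i => t i (a j)) = g (a j)
              rw [hup]
              exact hnu (g (a j)) (t i0 (a j)) i0
        obtain ⟨t, ht, hta⟩ :=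
          key (Fintype.card (Fin m → A)) (Fintype.equivFin (Fin m → A)).symm
        have htg : t = g := by
          funext x
          have := hta ((Fintype.equivFin (Fin m → A)) x)
          simpa using this
        exact htg ▸ ht
end

section
/- Let r ≥ 1, let Q_r = {0,1}^r be the hypercube with componentwise lattice operations, bottom element 0 and top element 1, and let f(x,y,z) = (x ∧ y) ∨ (y ∧ z) ∨ (x ∧ z) be the median function on Q_r. Then for every v ∈ Q_r and all x, y ∈ Q_r, f(v, χ_0(x ∨ y), χ_1(x ∧ y)) = x ⊕_v y; that is, the composed function g(x,y) = f(v, χ_0(x ∨ y), χ_1(x ∧ y)) satisfies g(x,y) = 0 if x = y = 0, g(x,y) = 1 if x = y = 1, and g(x,y) = v otherwise. -/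
/-- The median function `f(x,y,z) = (x ∧ y) ∨ (y ∧ z) ∨ (x ∧ z)` on the hypercube
`Q_r = {0,1}^r` (componentwise lattice operations). -/
def medianQ (r : ℕ) (x y z : Fin r → Bool) : Fin r → Bool :=
  (x ⊓ y) ⊔ (y ⊓ z) ⊔ (x ⊓ z)

lemma medianQ_bot_bot (r : ℕ) (v : Fin r → Bool) : medianQ r v ⊥ ⊥ = ⊥ := by
  simp [medianQ]

lemma medianQ_top_top (r : ℕ) (v : Fin r → Bool) : medianQ r v ⊤ ⊤ = ⊤ := by
  simp [medianQ]

lemma medianQ_top_bot (r : ℕ) (v : Fin r → Bool) : medianQ r v ⊤ ⊥ = v := by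
  simp [medianQ]

/-- On the hypercube `Q_r` (`r ≥ 1`), for every `v` and all `x, y`,
`f(v, χ_0(x ∨ y), χ_1(x ∧ y)) = x ⊕_v y`; that is, the composed function `g` takes
the value `0` if `x = y = 0`, the value `1` if `x = y = 1`, and `v` otherwise. -/
theorem medianQ_chi_eq_oplus (r : ℕ) (hr : 1 ≤ r) (v : Fin r → Bool) :
    ∀ x y : Fin r → Bool,
      medianQ r v (chi ⊥ (x ⊔ y)) (chi ⊤ (x ⊓ y)) = oplus v x y ∧
      (x = ⊥ → y = ⊥ → medianQ r v (chi ⊥ (x ⊔ y)) (chi ⊤ (x ⊓ y)) = ⊥) ∧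
      (x = ⊤ → y = ⊤ → medianQ r v (chi ⊥ (x ⊔ y)) (chi ⊤ (x ⊓ y)) = ⊤) ∧
      (¬ (x = ⊥ ∧ y = ⊥) → ¬ (x = ⊤ ∧ y = ⊤) →
        medianQ r v (chi ⊥ (x ⊔ y)) (chi ⊤ (x ⊓ y)) = v) := by
  intro x y
  have htb : (⊤ : Fin r → Bool) ≠ ⊥ := by
    intro h
    have := congrFun h ⟨0, hr⟩
    simp [Pi.top_apply, Pi.bot_apply] at this
  have hsup : x ⊔ y = ⊥ ↔ (x = ⊥ ∧ y = ⊥) := sup_eq_bot_iff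
  have hinf : x ⊓ y = ⊤ ↔ (x = ⊤ ∧ y = ⊤) := inf_eq_top_iff
  by_cases hbb : x = ⊥ ∧ y = ⊥
  · have h1 : chi (⊥ : Fin r → Bool) (x ⊔ y) = ⊥ := by
      simp [chi, hbb.1, hbb.2]
    have h2 : chi (⊤ : Fin r → Bool) (x ⊓ y) = ⊥ := by
      have : x ⊓ y = ⊥ := by simp [hbb.1, hbb.2]
      simp [chi, this, htb.symm]
    have htt : ¬ (x = ⊤ ∧ y = ⊤) := by
      rintro ⟨h, _⟩; exact htb (h ▸ hbb.1)
    rw [h1, h2, medianQ_bot_bot]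
    refine ⟨by simp [oplus, htt, hbb, (Ne.symm htb)], fun _ _ => rfl, ?_, ?_⟩
    · intro hx hy; exact absurd ⟨hx, hy⟩ htt
    · intro h _; exact absurd hbb h
  · have h1 : chi (⊥ : Fin r → Bool) (x ⊔ y) = ⊤ := by
      have : x ⊔ y ≠ ⊥ := fun h => hbb (hsup.mp h)
      simp [chi, this]
    by_cases htt : x = ⊤ ∧ y = ⊤
    · have h2 : chi (⊤ : Fin r → Bool) (x ⊓ y) = ⊤ := by
      -- x ⊓ y = ⊤
        have hi : x ⊓ y = ⊤ := hinf.mpr htt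
        simp [chi, hi, htb]
      rw [h1, h2, medianQ_top_top]
      refine ⟨by simp [oplus, htt], ?_, fun _ _ => rfl, ?_⟩
      · intro hx; rw [hx] at htt; exact absurd htt.1.symm htb
      · intro _ h; exact absurd htt h
    · have h2 : chi (⊤ : Fin r → Bool) (x ⊓ y) = ⊥ := by
        have : ¬ ((⊤ : Fin r → Bool) ≤ x ⊓ y ∧ x ⊓ y ≠ ⊥) := by
          rintro ⟨h, _⟩
          exact htt (hinf.mp (top_le_iff.mp h))
        simp only [chi, if_neg this]
      rw [h1, h2, medianQ_top_bot]
      exact ⟨by simp [oplus, htt, hbb], fun hx hy => absurd ⟨hx, hy⟩ hbb,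
        fun hx hy => absurd ⟨hx, hy⟩ htt, fun _ _ => rfl⟩
end

section
/- Let r ≥ 1 and let Q_r = {0,1}^r be the hypercube with componentwise lattice operations. Let f(x,y,z) = (x ∧ y) ∨ (y ∧ z) ∨ (x ∧ z) be the median function and for v ∈ Q_r let f_v : Q_r² → Q_r be defined by f_v(x,y) = f(v,x,y). Then the clone generated by the set G = {χ_v : v ∈ Q_r} ∪ {f_v : v ∈ Q_r} together with the lattice operations ∧ and ∨ equals the aggregation clone on Q_r, i.e. every aggregation function on Q_r of every arity belongs to this clone. -/
/-! ### Auxiliary definitions and lemmas -/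

/-- The generating set from the theorem statement. -/
abbrev Gset (r : ℕ) : Set ((n : ℕ) × ((Fin n → (Fin r → Bool)) → (Fin r → Bool))) :=
  ({⟨2, fun x => x 0 ⊔ x 1⟩, ⟨2, fun x => x 0 ⊓ x 1⟩} ∪
      {p | ∃ v : Fin r → Bool, p = ⟨1, fun x => chi v (x 0)⟩} ∪
      {p | ∃ v : Fin r → Bool, p = ⟨2, fun x => medianQ r v (x 0) (x 1)⟩})

section Aux

variable {r : ℕ}

lemma Qbot_ne_top (hr : 1 ≤ r) : (⊥ : Fin r → Bool) ≠ ⊤ := by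
  intro h
  have := congrFun h ⟨0, hr⟩
  simp at this

lemma chi_top {v x : Fin r → Bool} (h1 : v ≤ x) (h2 : x ≠ ⊥) : chi v x = ⊤ := if_pos ⟨h1, h2⟩

lemma chi_bot {v x : Fin r → Bool} (h : ¬(v ≤ x ∧ x ≠ ⊥)) : chi v x = ⊥ := if_neg h

lemma median_bot_left (v t : Fin r → Bool) : medianQ r v ⊥ t = v ⊓ t := by
  simp [medianQ]

lemma le_median_top (v s : Fin r → Bool) : v ≤ medianQ r v s ⊤ := by
  simp [medianQ]

lemma sup_mem_G : (⟨2, fun x => x 0 ⊔ x 1⟩ :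
    (n : ℕ) × ((Fin n → (Fin r → Bool)) → (Fin r → Bool))) ∈ Gset r :=
  Or.inl (Or.inl (Or.inl rfl))

lemma inf_mem_G : (⟨2, fun x => x 0 ⊓ x 1⟩ :
    (n : ℕ) × ((Fin n → (Fin r → Bool)) → (Fin r → Bool))) ∈ Gset r :=
  Or.inl (Or.inl (Or.inr rfl))

lemma chi_mem_G (v : Fin r → Bool) : (⟨1, fun x => chi v (x 0)⟩ :
    (n : ℕ) × ((Fin n → (Fin r → Bool)) → (Fin r → Bool))) ∈ Gset r :=
  Or.inl (Or.inr ⟨v, rfl⟩)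

lemma median_mem_G (v : Fin r → Bool) : (⟨2, fun x => medianQ r v (x 0) (x 1)⟩ :
    (n : ℕ) × ((Fin n → (Fin r → Bool)) → (Fin r → Bool))) ∈ Gset r :=
  Or.inr ⟨v, rfl⟩

lemma clone_sup {n : ℕ} {A B : (Fin n → (Fin r → Bool)) → (Fin r → Bool)}
    (hA : GenClone (Gset r) A) (hB : GenClone (Gset r) B) :
    GenClone (Gset r) (fun x => A x ⊔ B x) := by
  have h := GenClone.comp _ ![A, B]
    (GenClone.mem ⟨2, fun x => x 0 ⊔ x 1⟩ sup_mem_G)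
    (by
      intro i
      fin_cases i
      · simpa using hA
      · simpa using hB)
  simpa using h

lemma clone_inf {n : ℕ} {A B : (Fin n → (Fin r → Bool)) → (Fin r → Bool)}
    (hA : GenClone (Gset r) A) (hB : GenClone (Gset r) B) :
    GenClone (Gset r) (fun x => A x ⊓ B x) := by
  have h := GenClone.comp _ ![A, B]
    (GenClone.mem ⟨2, fun x => x 0 ⊓ x 1⟩ inf_mem_G)
    (by
      intro i
      fin_cases i
      · simpa using hA
      · simpa using hB)
  simpa using h

lemma clone_chi {n : ℕ} (v : Fin r → Bool) {A : (Fin n → (Fin r → Bool)) → (Fin r → Bool)}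
    (hA : GenClone (Gset r) A) :
    GenClone (Gset r) (fun x => chi v (A x)) := by
  have h := GenClone.comp _ ![A]
    (GenClone.mem ⟨1, fun x => chi v (x 0)⟩ (chi_mem_G v))
    (by intro i; fin_cases i; simpa using hA)
  simpa using h

lemma clone_median {n : ℕ} (v : Fin r → Bool)
    {A B : (Fin n → (Fin r → Bool)) → (Fin r → Bool)}
    (hA : GenClone (Gset r) A) (hB : GenClone (Gset r) B) :
    GenClone (Gset r) (fun x => medianQ r v (A x) (B x)) := by
  have h := GenClone.comp _ ![A, B]
    (GenClone.mem ⟨2, fun x => medianQ r v (x 0) (x 1)⟩ (median_mem_G v))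
    (by
      intro i
      fin_cases i
      · simpa using hA
      · simpa using hB)
  simpa using h

lemma clone_sup' {ι : Type*} {n : ℕ} {s : Finset ι} (hs : s.Nonempty)
    (F : ι → (Fin n → (Fin r → Bool)) → (Fin r → Bool))
    (h : ∀ j ∈ s, GenClone (Gset r) (F j)) :
    GenClone (Gset r) (fun x => s.sup' hs fun j => F j x) := by
  induction hs using Finset.Nonempty.cons_induction with
  | singleton a =>
      have e : (fun x => ({a} : Finset ι).sup' (Finset.singleton_nonempty a) fun j => F j x)
          = F a := funext fun x => Finset.sup'_singleton (fun j => F j x)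
      exact e.symm ▸ h a (Finset.mem_singleton_self a)
  | cons a s ha hs ih =>
      have e : (fun x => (Finset.cons a s ha).sup' (Finset.cons_nonempty ha) fun j => F j x)
          = fun x => F a x ⊔ s.sup' hs fun j => F j x :=
        funext fun x => Finset.sup'_cons hs (fun j => F j x)
      exact e.symm ▸ clone_sup (h a (Finset.mem_cons_self a s))
        (ih fun j hj => h j (Finset.mem_cons_of_mem hj))

lemma clone_inf' {ι : Type*} {n : ℕ} {s : Finset ι} (hs : s.Nonempty)
    (F : ι → (Fin n → (Fin r → Bool)) → (Fin r → Bool))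
    (h : ∀ j ∈ s, GenClone (Gset r) (F j)) :
    GenClone (Gset r) (fun x => s.inf' hs fun j => F j x) := by
  induction hs using Finset.Nonempty.cons_induction with
  | singleton a =>
      have e : (fun x => ({a} : Finset ι).inf' (Finset.singleton_nonempty a) fun j => F j x)
          = F a := funext fun x => Finset.inf'_singleton (fun j => F j x)
      exact e.symm ▸ h a (Finset.mem_singleton_self a)
  | cons a s ha hs ih =>
      have e : (fun x => (Finset.cons a s ha).inf' (Finset.cons_nonempty ha) fun j => F j x)
          = fun x => F a x ⊓ s.inf' hs fun j => F j x :=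
        funext fun x => Finset.inf'_cons hs (fun j => F j x)
      exact e.symm ▸ clone_inf (h a (Finset.mem_cons_self a s))
        (ih fun j hj => h j (Finset.mem_cons_of_mem hj))

end Aux

open Classical in
/-- `S(x) = ⊓ i, χ_⊤(x_i)`: equals `⊤` iff `x` is the top tuple. -/
noncomputable def Sfun (r n : ℕ) (x : Fin n → Fin r → Bool) : Fin r → Bool :=
  Finset.univ.inf fun i => chi ⊤ (x i)

open Classical in
/-- `T_a(x) = ⊓ {i | a_i ≠ ⊥}, χ_{a_i}(x_i)`: for `a ≠ ⊥`, equals `⊤` iff `a ≤ x`. -/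
noncomputable def Tfun (r n : ℕ) (a x : Fin n → Fin r → Bool) : Fin r → Bool :=
  (Finset.univ.filter fun i => a i ≠ ⊥).inf fun i => chi (a i) (x i)

lemma clone_S {r : ℕ} (m : ℕ) : GenClone (Gset r) (Sfun r (m + 1)) := by
  classical
  have he : Sfun r (m + 1) = fun x =>
      Finset.univ.inf' Finset.univ_nonempty fun i => chi ⊤ (x i) := by
    funext x
    rw [Sfun, Finset.inf'_eq_inf]
  rw [he]
  exact clone_inf' Finset.univ_nonempty (fun i x => chi ⊤ (x i))
    (fun i _ => clone_chi ⊤ (GenClone.proj i))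

lemma clone_T {r n : ℕ} (a : Fin n → Fin r → Bool) (ha : a ≠ ⊥) :
    GenClone (Gset r) (Tfun r n a) := by
  classical
  obtain ⟨i, hi⟩ := Function.ne_iff.mp ha
  have hi' : a i ≠ ⊥ := by simpa using hi
  have hne : (Finset.univ.filter fun i => a i ≠ ⊥).Nonempty :=
    ⟨i, by simp [hi']⟩
  have he : Tfun r n a = fun x =>
      (Finset.univ.filter fun i => a i ≠ ⊥).inf' hne fun i => chi (a i) (x i) := by
    funext x
    rw [Tfun, Finset.inf'_eq_inf]
  rw [he]
  exact clone_inf' hne (fun i x => chi (a i) (x i))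
    (fun i _ => clone_chi (a i) (GenClone.proj i))

lemma reverse_aux {r : ℕ} (hr : 1 ≤ r) (m : ℕ)
    (A : (Fin (m + 1) → Fin r → Bool) → Fin r → Bool)
    (hmono : Monotone A) (hbot : A ⊥ = ⊥) (htop : A ⊤ = ⊤) :
    GenClone (Gset r) A := by
  classical
  have hne : (Finset.univ.erase (⊥ : Fin (m + 1) → Fin r → Bool)).Nonempty := by
    refine ⟨⊤, Finset.mem_erase.mpr ⟨?_, Finset.mem_univ _⟩⟩
    intro h
    exact Qbot_ne_top hr ((congrFun h 0).symm)
  have hclone : GenClone (Gset r) (fun x =>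
      (Finset.univ.erase (⊥ : Fin (m + 1) → Fin r → Bool)).sup' hne
        fun a => medianQ r (A a) (Sfun r (m + 1) x) (Tfun r (m + 1) a x)) :=
    clone_sup' hne
      (fun a x => medianQ r (A a) (Sfun r (m + 1) x) (Tfun r (m + 1) a x))
      (fun a ha => clone_median (A a) (clone_S m)
        (clone_T a (Finset.mem_erase.mp ha).1))
  have main : (fun x =>
      (Finset.univ.erase (⊥ : Fin (m + 1) → Fin r → Bool)).sup' hne
        fun a => medianQ r (A a) (Sfun r (m + 1) x) (Tfun r (m + 1) a x)) = A := by
    funext x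
    apply le_antisymm
    · apply Finset.sup'_le
      intro a ha
      obtain ⟨ha0, -⟩ := Finset.mem_erase.mp ha
      by_cases hx : x = ⊤
      · subst hx; rw [htop]; exact le_top
      · have hS : Sfun r (m + 1) x = ⊥ := by
          obtain ⟨i, hi⟩ := Function.ne_iff.mp hx
          have hi' : x i ≠ ⊤ := by simpa using hi
          have hc : chi (⊤ : Fin r → Bool) (x i) = ⊥ :=
            chi_bot (fun hc => hi' (top_le_iff.mp hc.1))
          rw [Sfun]
          exact le_bot_iff.mp
            (le_trans (Finset.inf_le (Finset.mem_univ i)) (le_of_eq hc))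
        rw [hS, median_bot_left]
        by_cases hax : a ≤ x
        · exact le_trans inf_le_left (hmono hax)
        · have hT : Tfun r (m + 1) a x = ⊥ := by
            rw [Pi.le_def, not_forall] at hax
            obtain ⟨i, hi⟩ := hax
            have hai : a i ≠ ⊥ := fun h => hi (h ▸ bot_le)
            have hc : chi (a i) (x i) = ⊥ := chi_bot (fun hc => hi hc.1)
            rw [Tfun]
            exact le_bot_iff.mp
              (le_trans (Finset.inf_le (by simp [hai])) (le_of_eq hc))
          rw [hT, inf_bot_eq]
          exact bot_le
    · by_cases hx0 : x = ⊥
      · subst hx0; rw [hbot]; exact bot_le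
      · have hmem : x ∈ Finset.univ.erase (⊥ : Fin (m + 1) → Fin r → Bool) :=
          Finset.mem_erase.mpr ⟨hx0, Finset.mem_univ _⟩
        refine le_trans ?_ (Finset.le_sup' _ hmem)
        have hT : Tfun r (m + 1) x x = ⊤ := by
          rw [Tfun]
          refine le_antisymm le_top (Finset.le_inf fun i hi => ?_)
          rw [chi_top le_rfl (Finset.mem_filter.mp hi).2]
        rw [hT]
        exact le_median_top _ _
  exact main ▸ hclone

/-- Let `r ≥ 1` and for `v ∈ Q_r` let `f_v(x,y) = f(v,x,y)` where `f` is the median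
function on the hypercube `Q_r`.  The clone generated by
`G = {χ_v : v ∈ Q_r} ∪ {f_v : v ∈ Q_r}` together with the lattice operations `∧`
and `∨` equals the aggregation clone on `Q_r`: an operation of any arity belongs to
it iff it is an aggregation function on `Q_r`. -/
theorem hypercube_aggClone_generated (r : ℕ) (hr : 1 ≤ r) :
    ∀ (n : ℕ) (A : (Fin n → (Fin r → Bool)) → (Fin r → Bool)),
      GenClone ({⟨2, fun x => x 0 ⊔ x 1⟩, ⟨2, fun x => x 0 ⊓ x 1⟩} ∪
          {p | ∃ v : Fin r → Bool, p = ⟨1, fun x => chi v (x 0)⟩} ∪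
          {p | ∃ v : Fin r → Bool, p = ⟨2, fun x => medianQ r v (x 0) (x 1)⟩}) A ↔
        IsAgg A := by
  intro n A
  constructor
  · intro h
    induction h with
    | mem p hp =>
        simp only [Set.mem_union, Set.mem_insert_iff, Set.mem_singleton_iff,
          Set.mem_setOf_eq] at hp
        rcases hp with ((rfl | rfl) | ⟨v, rfl⟩) | ⟨v, rfl⟩
        · exact ⟨fun x y hxy => sup_le_sup (hxy 0) (hxy 1), by simp, by simp⟩
        · exact ⟨fun x y hxy => inf_le_inf (hxy 0) (hxy 1), by simp, by simp⟩
        · refine ⟨?_, ?_, ?_⟩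
          · intro x y hxy
            by_cases hc : v ≤ x 0 ∧ x 0 ≠ ⊥
            · have h1 : chi v (x 0) = ⊤ := chi_top hc.1 hc.2
              have h2 : chi v (y 0) = ⊤ :=
                chi_top (hc.1.trans (hxy 0))
                  (fun hy => hc.2 (le_bot_iff.mp (hy ▸ hxy 0)))
              show chi v (x 0) ≤ chi v (y 0)
              rw [h1, h2]
            · show chi v (x 0) ≤ chi v (y 0)
              rw [chi_bot hc]
              exact bot_le
          · show chi v ((⊥ : Fin 1 → Fin r → Bool) 0) = ⊥
            exact chi_bot (by simp)
          · show chi v ((⊤ : Fin 1 → Fin r → Bool) 0) = ⊤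
            exact chi_top le_top (Qbot_ne_top hr).symm
        · refine ⟨?_, by simp [medianQ], by simp [medianQ]⟩
          intro x y hxy
          show medianQ r v (x 0) (x 1) ≤ medianQ r v (y 0) (y 1)
          exact sup_le_sup
            (sup_le_sup (inf_le_inf le_rfl (hxy 0)) (inf_le_inf (hxy 0) (hxy 1)))
            (inf_le_inf le_rfl (hxy 1))
    | proj i => exact ⟨fun x y hxy => hxy i, rfl, rfl⟩
    | comp f g hf hg ihf ihg =>
        refine ⟨fun x y hxy => ihf.1 (fun i => (ihg i).1 hxy), ?_, ?_⟩
        · show f (fun i => g i ⊥) = ⊥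
          have : (fun i => g i ⊥) = ⊥ := funext fun i => (ihg i).2.1
          rw [this, ihf.2.1]
        · show f (fun i => g i ⊤) = ⊤
          have : (fun i => g i ⊤) = ⊤ := funext fun i => (ihg i).2.2
          rw [this, ihf.2.2]
  · rintro ⟨hmono, hbot, htop⟩
    cases n with
    | zero =>
        exfalso
        have h0 : (⊥ : Fin 0 → Fin r → Bool) = ⊤ := Subsingleton.elim _ _
        exact Qbot_ne_top hr (hbot.symm.trans ((congrArg A h0).trans htop))
    | succ m => exact reverse_aux hr m A hmono hbot htop
end
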